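/- arXiv:math/0503658 — 7 statements merged into one kernel-verified Lean document; each statement's English description precedes it below -/
import Mathlib

section
/- Let G be a group and σ, δ, δ' elements of G. If (a) δ(σδδ'σ) = (σδδ'σ)δ, (b) σδσδ = δσδσ, and (c) σδ'σδ' = δ'σδ'σ, then δ'(σδδ'σ) = (σδδ'σ)δ'. -/
theorem stmt_0 (G : Type*) [Group G] (σ δ δ' : G)
    (ha : δ * (σ * δ * δ' * σ) = (σ * δ * δ' * σ) * δ)
    (hb : σ * δ * σ * δ = δ * σ * δ * σ)
    (hc : σ * δ' * σ * δ' = δ' * σ * δ' * σ) :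
    δ' * (σ * δ * δ' * σ) = (σ * δ * δ' * σ) * δ' := by
  have K : σ * δ * σ⁻¹ * (δ' * σ) = δ' * (σ * δ) := by
    apply mul_left_cancel (a := σ * δ)
    calc σ * δ * (σ * δ * σ⁻¹ * (δ' * σ))
        = (σ * δ * σ * δ) * σ⁻¹ * (δ' * σ) := by group
      _ = (δ * σ * δ * σ) * σ⁻¹ * (δ' * σ) := by rw [hb]
      _ = δ * (σ * δ * δ' * σ) := by group
      _ = (σ * δ * δ' * σ) * δ := ha
      _ = σ * δ * (δ' * (σ * δ)) := by group
  calc δ' * (σ * δ * δ' * σ)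
      = δ' * (σ * δ) * (δ' * σ) := by group
    _ = σ * δ * σ⁻¹ * (δ' * σ) * (δ' * σ) := by rw [K]
    _ = σ * δ * σ⁻¹ * (δ' * σ * δ' * σ) := by group
    _ = σ * δ * σ⁻¹ * (σ * δ' * σ * δ') := by rw [hc]
    _ = (σ * δ * δ' * σ) * δ' := by group
end

section
/- Let G be a group and σ, δ, δ' elements of G. If (a) δ(σδδ'σ) = σ(δδ'σδ), (b) δ'(σδδ'σ) = (σδδ'σ)δ', and (c) σδ'σδ' = δ'σδ'σ, then σδσδ = δσδσ. -/
theorem stmt_1 (G : Type*) [Group G] (σ δ δ' : G)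
    (ha : δ * (σ * δ * δ' * σ) = σ * (δ * δ' * σ * δ))
    (hb : δ' * (σ * δ * δ' * σ) = (σ * δ * δ' * σ) * δ')
    (hc : σ * δ' * σ * δ' = δ' * σ * δ' * σ) :
    σ * δ * σ * δ = δ * σ * δ * σ := by
  have key : δ' * σ * δ = σ * δ * σ⁻¹ * δ' * σ := by
    have h1 : δ' * σ * δ * (δ' * σ) = (σ * δ * σ⁻¹ * δ' * σ) * (δ' * σ) := by
      calc δ' * σ * δ * (δ' * σ) = δ' * (σ * δ * δ' * σ) := by group
        _ = (σ * δ * δ' * σ) * δ' := hb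
        _ = σ * δ * σ⁻¹ * (σ * δ' * σ * δ') := by group
        _ = σ * δ * σ⁻¹ * (δ' * σ * δ' * σ) := by rw [hc]
        _ = (σ * δ * σ⁻¹ * δ' * σ) * (δ' * σ) := by group
    exact mul_right_cancel h1
  have h2 : δ * σ * δ * σ * (σ⁻¹ * δ' * σ) = σ * δ * σ * δ * (σ⁻¹ * δ' * σ) := by
    calc δ * σ * δ * σ * (σ⁻¹ * δ' * σ) = δ * (σ * δ * δ' * σ) := by group
      _ = σ * (δ * δ' * σ * δ) := ha
      _ = σ * δ * (δ' * σ * δ) := by group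
      _ = σ * δ * (σ * δ * σ⁻¹ * δ' * σ) := by rw [key]
      _ = σ * δ * σ * δ * (σ⁻¹ * δ' * σ) := by group
  exact (mul_right_cancel h2).symm
end

section
/- Let G be a group and σ, δ₁, δ₂, δ₁', δ₂' elements of G such that σ commutes with δᵢ² and δᵢ'² for i = 1,2, and σδ₂'δ₂σ = δ₂δ₂' and σδ₁'δ₁σ = δ₁δ₁'. Then δ₂σδ₁δ₂σ = δ₁δ₂² if and only if δ₂σδ₁δ₂' = δ₁δ₂'δ₂σ. -/
theorem stmt_4 (G : Type*) [Group G] (σ δ₁ δ₂ δ₁' δ₂' : G)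
    (h1 : σ * δ₁ ^ 2 = δ₁ ^ 2 * σ) (h2 : σ * δ₂ ^ 2 = δ₂ ^ 2 * σ)
    (h1' : σ * δ₁' ^ 2 = δ₁' ^ 2 * σ) (h2' : σ * δ₂' ^ 2 = δ₂' ^ 2 * σ)
    (hc : σ * δ₂' * δ₂ * σ = δ₂ * δ₂') (hd : σ * δ₁' * δ₁ * σ = δ₁ * δ₁') :
    δ₂ * σ * δ₁ * δ₂ * σ = δ₁ * δ₂ ^ 2 ↔ δ₂ * σ * δ₁ * δ₂' = δ₁ * δ₂' * δ₂ * σ := by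
  have key : δ₂' * δ₂ * σ = σ⁻¹ * (δ₂ * δ₂') := by
    rw [← hc]; group
  have h2s : σ⁻¹ * δ₂ ^ 2 = δ₂ ^ 2 * σ⁻¹ := by
    rw [inv_mul_eq_iff_eq_mul, ← mul_assoc, h2, mul_assoc, mul_inv_cancel, mul_one]
  have hB : δ₁ * σ⁻¹ * δ₂ * (δ₂ * σ) = δ₁ * δ₂ ^ 2 := by
    calc δ₁ * σ⁻¹ * δ₂ * (δ₂ * σ) = δ₁ * (σ⁻¹ * δ₂ ^ 2) * σ := by rw [sq]; group
    _ = δ₁ * (δ₂ ^ 2 * σ⁻¹) * σ := by rw [h2s]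
    _ = δ₁ * δ₂ ^ 2 := by group
  have iffA : (δ₂ * σ * δ₁ * δ₂ * σ = δ₁ * δ₂ ^ 2) ↔ (δ₂ * σ * δ₁ = δ₁ * σ⁻¹ * δ₂) := by
    rw [← hB, show δ₂ * σ * δ₁ * δ₂ * σ = δ₂ * σ * δ₁ * (δ₂ * σ) from by group]
    exact mul_left_inj _
  have hC : δ₁ * δ₂' * δ₂ * σ = δ₁ * σ⁻¹ * δ₂ * δ₂' := by
    calc δ₁ * δ₂' * δ₂ * σ = δ₁ * (δ₂' * δ₂ * σ) := by group
    _ = δ₁ * (σ⁻¹ * (δ₂ * δ₂')) := by rw [key]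
    _ = δ₁ * σ⁻¹ * δ₂ * δ₂' := by group
  have iffB : (δ₂ * σ * δ₁ * δ₂' = δ₁ * δ₂' * δ₂ * σ) ↔ (δ₂ * σ * δ₁ = δ₁ * σ⁻¹ * δ₂) := by
    rw [hC]
    exact mul_left_inj _
  rw [iffA, iffB]
end

section
/- Let G be a group and σ, δ₁, δ₂, δ₁', δ₂' elements of G such that σ commutes with δᵢ² and δᵢ'² for i = 1,2, and σδ₂'δ₂σ = δ₂δ₂' and σδ₁'δ₁σ = δ₁δ₁'. Then δ₂'σδ₁'δ₂'σ = δ₁'δ₂'² if and only if δ₁δ₂'σδ₁' = σδ₁'δ₁δ₂'. -/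
theorem stmt_5 (G : Type*) [Group G] (σ δ₁ δ₂ δ₁' δ₂' : G)
    (h1 : σ * δ₁ ^ 2 = δ₁ ^ 2 * σ) (h2 : σ * δ₂ ^ 2 = δ₂ ^ 2 * σ)
    (h1' : σ * δ₁' ^ 2 = δ₁' ^ 2 * σ) (h2' : σ * δ₂' ^ 2 = δ₂' ^ 2 * σ)
    (hc : σ * δ₂' * δ₂ * σ = δ₂ * δ₂') (hd : σ * δ₁' * δ₁ * σ = δ₁ * δ₁') :
    δ₂' * σ * δ₁' * δ₂' * σ = δ₁' * δ₂' ^ 2 ↔ δ₁ * δ₂' * σ * δ₁' = σ * δ₁' * δ₁ * δ₂' := by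
  have e2 : σ⁻¹ * δ₂' ^ 2 = δ₂' ^ 2 * σ⁻¹ := by
    calc σ⁻¹ * δ₂' ^ 2 = σ⁻¹ * (δ₂' ^ 2 * σ) * σ⁻¹ := by group
      _ = σ⁻¹ * (σ * δ₂' ^ 2) * σ⁻¹ := by rw [h2']
      _ = δ₂' ^ 2 * σ⁻¹ := by group
  have hd' : σ * δ₁' * δ₁ = δ₁ * δ₁' * σ⁻¹ := by
    calc σ * δ₁' * δ₁ = (σ * δ₁' * δ₁ * σ) * σ⁻¹ := by group
      _ = (δ₁ * δ₁') * σ⁻¹ := by rw [hd]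
      _ = δ₁ * δ₁' * σ⁻¹ := by group
  constructor
  · intro hL
    have e3 : δ₂' * σ * δ₁' = δ₁' * σ⁻¹ * δ₂' := by
      calc δ₂' * σ * δ₁' = (δ₂' * σ * δ₁' * δ₂' * σ) * σ⁻¹ * δ₂'⁻¹ := by group
        _ = (δ₁' * δ₂' ^ 2) * σ⁻¹ * δ₂'⁻¹ := by rw [hL]
        _ = δ₁' * (δ₂' ^ 2 * σ⁻¹) * δ₂'⁻¹ := by group
        _ = δ₁' * (σ⁻¹ * δ₂' ^ 2) * δ₂'⁻¹ := by rw [e2]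
        _ = δ₁' * σ⁻¹ * δ₂' := by group
    calc δ₁ * δ₂' * σ * δ₁' = δ₁ * (δ₂' * σ * δ₁') := by group
      _ = δ₁ * (δ₁' * σ⁻¹ * δ₂') := by rw [e3]
      _ = (δ₁ * δ₁' * σ⁻¹) * δ₂' := by group
      _ = (σ * δ₁' * δ₁) * δ₂' := by rw [hd']
      _ = σ * δ₁' * δ₁ * δ₂' := by group
  · intro hR
    have e3 : δ₂' * σ * δ₁' = δ₁' * σ⁻¹ * δ₂' := by
      have h4 : δ₁ * (δ₂' * σ * δ₁') = δ₁ * (δ₁' * σ⁻¹ * δ₂') := by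
        calc δ₁ * (δ₂' * σ * δ₁') = δ₁ * δ₂' * σ * δ₁' := by group
          _ = σ * δ₁' * δ₁ * δ₂' := hR
          _ = (σ * δ₁' * δ₁) * δ₂' := by group
          _ = (δ₁ * δ₁' * σ⁻¹) * δ₂' := by rw [hd']
          _ = δ₁ * (δ₁' * σ⁻¹ * δ₂') := by group
      exact mul_left_cancel h4
    calc δ₂' * σ * δ₁' * δ₂' * σ = (δ₂' * σ * δ₁') * (δ₂' * σ) := by group
      _ = (δ₁' * σ⁻¹ * δ₂') * (δ₂' * σ) := by rw [e3]
      _ = δ₁' * (σ⁻¹ * δ₂' ^ 2) * σ := by rw [pow_two]; group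
      _ = δ₁' * (δ₂' ^ 2 * σ⁻¹) * σ := by rw [e2]
      _ = δ₁' * δ₂' ^ 2 := by group
end

section
/- In the group G presented by generators σ₁, δ₁, δ₂ and relations δ₁²σ₁ = σ₁δ₁², δ₂²σ₁ = σ₁δ₂², δ₂σ₁δ₁δ₂σ₁ = δ₁δ₂², and σ₁δ₁δ₂σ₁ = δ₂δ₁, the relations δ₁²δ₂ = δ₂δ₁² and δ₂²δ₁ = δ₁δ₂² hold. -/
/-- Relations of the presentation
`⟨σ₁,δ₁,δ₂ ∣ δ₁²σ₁=σ₁δ₁², δ₂²σ₁=σ₁δ₂², δ₂σ₁δ₁δ₂σ₁=δ₁δ₂², σ₁δ₁δ₂σ₁=δ₂δ₁⟩`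
of `B₂(Σ_{1,0})`, with `σ₁ = 0`, `δ₁ = 1`, `δ₂ = 2`. -/
def b2rels : Set (FreeGroup (Fin 3)) :=
  { FreeGroup.of 1 ^ 2 * FreeGroup.of 0 * (FreeGroup.of 0 * FreeGroup.of 1 ^ 2)⁻¹,
    FreeGroup.of 2 ^ 2 * FreeGroup.of 0 * (FreeGroup.of 0 * FreeGroup.of 2 ^ 2)⁻¹,
    FreeGroup.of 2 * FreeGroup.of 0 * FreeGroup.of 1 * FreeGroup.of 2 * FreeGroup.of 0 *
      (FreeGroup.of 1 * FreeGroup.of 2 ^ 2)⁻¹,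
    FreeGroup.of 0 * FreeGroup.of 1 * FreeGroup.of 2 * FreeGroup.of 0 *
      (FreeGroup.of 2 * FreeGroup.of 1)⁻¹ }

lemma b2rel_eq_one {r : FreeGroup (Fin 3)} (hr : r ∈ b2rels) :
    PresentedGroup.mk b2rels r = 1 :=
  (QuotientGroup.eq_one_iff r).mpr (Subgroup.subset_normalClosure hr)

theorem stmt_7 :
    let σ₁ : PresentedGroup b2rels := PresentedGroup.of 0
    let δ₁ : PresentedGroup b2rels := PresentedGroup.of 1
    let δ₂ : PresentedGroup b2rels := PresentedGroup.of 2
    δ₁ ^ 2 * δ₂ = δ₂ * δ₁ ^ 2 ∧ δ₂ ^ 2 * δ₁ = δ₁ * δ₂ ^ 2 := by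
  intro σ₁ δ₁ δ₂
  have hA : δ₁ ^ 2 * σ₁ = σ₁ * δ₁ ^ 2 := by
    have := b2rel_eq_one (r := FreeGroup.of 1 ^ 2 * FreeGroup.of 0 *
      (FreeGroup.of 0 * FreeGroup.of 1 ^ 2)⁻¹) (by simp [b2rels])
    simp only [map_mul, map_inv, map_pow, mul_inv_eq_one] at this
    exact this
  have hB : δ₂ ^ 2 * σ₁ = σ₁ * δ₂ ^ 2 := by
    have := b2rel_eq_one (r := FreeGroup.of 2 ^ 2 * FreeGroup.of 0 *
      (FreeGroup.of 0 * FreeGroup.of 2 ^ 2)⁻¹) (by simp [b2rels])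
    simp only [map_mul, map_inv, map_pow, mul_inv_eq_one] at this
    exact this
  have hC : δ₂ * σ₁ * δ₁ * δ₂ * σ₁ = δ₁ * δ₂ ^ 2 := by
    have := b2rel_eq_one (r := FreeGroup.of 2 * FreeGroup.of 0 * FreeGroup.of 1 *
      FreeGroup.of 2 * FreeGroup.of 0 * (FreeGroup.of 1 * FreeGroup.of 2 ^ 2)⁻¹)
      (by simp [b2rels])
    simp only [map_mul, map_inv, map_pow, mul_inv_eq_one] at this
    exact this
  have hD : σ₁ * δ₁ * δ₂ * σ₁ = δ₂ * δ₁ := by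
    have := b2rel_eq_one (r := FreeGroup.of 0 * FreeGroup.of 1 * FreeGroup.of 2 *
      FreeGroup.of 0 * (FreeGroup.of 2 * FreeGroup.of 1)⁻¹) (by simp [b2rels])
    simp only [map_mul, map_inv, map_pow, mul_inv_eq_one] at this
    exact this
  clear_value σ₁ δ₁ δ₂
  constructor
  · have key : δ₂ * δ₁ ^ 2 * δ₂ = δ₁ ^ 2 * δ₂ ^ 2 := by
      have e1 : δ₂ * δ₁ ^ 2 * δ₂ = (δ₂ * δ₁) * (δ₁ * δ₂) := by
        simp [pow_two, mul_assoc]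
      have e2 : (σ₁ * δ₁ * δ₂ * σ₁) * (δ₁ * δ₂) =
          σ₁ * δ₁ * (δ₂ * σ₁ * δ₁ * δ₂ * σ₁) * σ₁⁻¹ := by
        simp [mul_assoc]
      rw [e1, ← hD, e2, hC]
      have h1 : σ₁ * δ₁ * (δ₁ * δ₂ ^ 2) = δ₁ ^ 2 * δ₂ ^ 2 * σ₁ := by
        calc σ₁ * δ₁ * (δ₁ * δ₂ ^ 2) = σ₁ * δ₁ ^ 2 * δ₂ ^ 2 := by
              simp [pow_two, mul_assoc]
          _ = δ₁ ^ 2 * σ₁ * δ₂ ^ 2 := by rw [← hA]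
          _ = δ₁ ^ 2 * (δ₂ ^ 2 * σ₁) := by rw [mul_assoc, ← hB]
          _ = δ₁ ^ 2 * δ₂ ^ 2 * σ₁ := (mul_assoc _ _ _).symm
      rw [h1, mul_inv_cancel_right]
    have : δ₂ * δ₁ ^ 2 * δ₂ = (δ₁ ^ 2 * δ₂) * δ₂ := by
      rw [key]; simp [pow_two, mul_assoc]
    exact (mul_right_cancel this).symm
  · calc δ₂ ^ 2 * δ₁ = δ₂ * (δ₂ * δ₁) := by simp [pow_two, mul_assoc]
      _ = δ₂ * (σ₁ * δ₁ * δ₂ * σ₁) := by rw [hD]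
      _ = δ₂ * σ₁ * δ₁ * δ₂ * σ₁ := by simp [mul_assoc]
      _ = δ₁ * δ₂ ^ 2 := hC
end

section
/- Let G be a group and σ₁, δ₁, δ₂ elements of G such that δ₁²σ₁ = σ₁δ₁², δ₂²σ₁ = σ₁δ₂², and σ₁δ₁δ₂σ₁ = δ₂δ₁. Then δ₂σ₁δ₁δ₂σ₁ = δ₁δ₂² if and only if both δ₁²δ₂ = δ₂δ₁² and δ₂²δ₁ = δ₁δ₂². -/
theorem stmt_8 (G : Type*) [Group G] (σ₁ δ₁ δ₂ : G)
    (h1 : δ₁ ^ 2 * σ₁ = σ₁ * δ₁ ^ 2) (h2 : δ₂ ^ 2 * σ₁ = σ₁ * δ₂ ^ 2)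
    (h3 : σ₁ * δ₁ * δ₂ * σ₁ = δ₂ * δ₁) :
    δ₂ * σ₁ * δ₁ * δ₂ * σ₁ = δ₁ * δ₂ ^ 2 ↔
      (δ₁ ^ 2 * δ₂ = δ₂ * δ₁ ^ 2 ∧ δ₂ ^ 2 * δ₁ = δ₁ * δ₂ ^ 2) := by
  have key : δ₂ * σ₁ * δ₁ * δ₂ * σ₁ = δ₂ ^ 2 * δ₁ := by
    calc δ₂ * σ₁ * δ₁ * δ₂ * σ₁ = δ₂ * (σ₁ * δ₁ * δ₂ * σ₁) := by group
    _ = δ₂ * (δ₂ * δ₁) := by rw [h3]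
    _ = δ₂ ^ 2 * δ₁ := by rw [sq]; group
  constructor
  · intro h
    have hc : δ₂ ^ 2 * δ₁ = δ₁ * δ₂ ^ 2 := by rw [← key, h]
    refine ⟨?_, hc⟩
    have e1 : (δ₂ * σ₁ * δ₁) * (δ₂ * σ₁) = (δ₁ * σ₁⁻¹ * δ₂) * (δ₂ * σ₁) := by
      calc (δ₂ * σ₁ * δ₁) * (δ₂ * σ₁) = δ₂ * σ₁ * δ₁ * δ₂ * σ₁ := by group
      _ = δ₁ * δ₂ ^ 2 := by rw [key, hc]
      _ = δ₁ * σ₁⁻¹ * (δ₂ ^ 2 * σ₁) := by rw [h2]; group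
      _ = (δ₁ * σ₁⁻¹ * δ₂) * (δ₂ * σ₁) := by rw [sq]; group
    have star : δ₂ * σ₁ * δ₁ = δ₁ * σ₁⁻¹ * δ₂ := mul_right_cancel e1
    have hδδ : δ₁ * δ₂ = σ₁⁻¹ * (δ₂ * δ₁) * σ₁⁻¹ := by
      rw [← h3]; group
    calc δ₁ ^ 2 * δ₂ = δ₁ * (δ₁ * δ₂) := by rw [sq]; group
    _ = δ₁ * (σ₁⁻¹ * (δ₂ * δ₁) * σ₁⁻¹) := by rw [hδδ]
    _ = (δ₁ * σ₁⁻¹ * δ₂) * δ₁ * σ₁⁻¹ := by group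
    _ = (δ₂ * σ₁ * δ₁) * δ₁ * σ₁⁻¹ := by rw [star]
    _ = δ₂ * (σ₁ * δ₁ ^ 2) * σ₁⁻¹ := by rw [sq]; group
    _ = δ₂ * (δ₁ ^ 2 * σ₁) * σ₁⁻¹ := by rw [h1]
    _ = δ₂ * δ₁ ^ 2 := by group
  · rintro ⟨-, hc⟩
    rw [key, hc]
end

section
/- The monoid M presented by ⟨a, b, c ∣ a²b = ba², b²a = ab², a²c = ca², b²c = cb², a²b² = c²⟩⁺ is left and right cancellative. -/
/-- Relations of the presentation `⟨a,b,c ∣ a²b=ba², b²a=ab², a²c=ca², b²c=cb², a²b²=c²⟩`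
of the braid group `B₂(Σ_{1,0})`, as elements of the free group on `a = 0`, `b = 1`, `c = 2`. -/
def grels : Set (FreeGroup (Fin 3)) :=
  { FreeGroup.of 0 ^ 2 * FreeGroup.of 1 * (FreeGroup.of 1 * FreeGroup.of 0 ^ 2)⁻¹,
    FreeGroup.of 1 ^ 2 * FreeGroup.of 0 * (FreeGroup.of 0 * FreeGroup.of 1 ^ 2)⁻¹,
    FreeGroup.of 0 ^ 2 * FreeGroup.of 2 * (FreeGroup.of 2 * FreeGroup.of 0 ^ 2)⁻¹,
    FreeGroup.of 1 ^ 2 * FreeGroup.of 2 * (FreeGroup.of 2 * FreeGroup.of 1 ^ 2)⁻¹,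
    FreeGroup.of 0 ^ 2 * FreeGroup.of 1 ^ 2 * (FreeGroup.of 2 ^ 2)⁻¹ }

/-- Relations `a² = b² = c² = 1` of the universal Coxeter group `W(a,b,c)`. -/
def wrels : Set (FreeGroup (Fin 3)) :=
  { FreeGroup.of 0 ^ 2, FreeGroup.of 1 ^ 2, FreeGroup.of 2 ^ 2 }

/-- The braid group `B₂(Σ_{1,0})` via the presentation above. -/
abbrev G := PresentedGroup grels

/-- The universal Coxeter group `W(a,b,c) = ℤ/2 * ℤ/2 * ℤ/2`. -/
abbrev W := PresentedGroup wrels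

def ga : G := PresentedGroup.of 0
def gb : G := PresentedGroup.of 1
def gc : G := PresentedGroup.of 2
def wa : W := PresentedGroup.of 0
def wb : W := PresentedGroup.of 1
def wc : W := PresentedGroup.of 2
/-- The defining relations of the positive monoid presentation
`⟨a,b,c ∣ a²b=ba², b²a=ab², a²c=ca², b²c=cb², a²b²=c²⟩⁺`, on the free monoid
on `a = 0`, `b = 1`, `c = 2`. -/
inductive mrels : FreeMonoid (Fin 3) → FreeMonoid (Fin 3) → Prop
  | ab : mrels (.of 0 * .of 0 * .of 1) (.of 1 * (.of 0 * .of 0))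
  | ba : mrels (.of 1 * .of 1 * .of 0) (.of 0 * (.of 1 * .of 1))
  | ac : mrels (.of 0 * .of 0 * .of 2) (.of 2 * (.of 0 * .of 0))
  | bc : mrels (.of 1 * .of 1 * .of 2) (.of 2 * (.of 1 * .of 1))
  | c2 : mrels (.of 0 * .of 0 * (.of 1 * .of 1)) (.of 2 * .of 2)

/-- The positive monoid `B₂⁺(Σ_{1,0})` given by the presentation above. -/
abbrev M := PresentedMonoid mrels

def ma : M := PresentedMonoid.of mrels 0
def mb : M := PresentedMonoid.of mrels 1
def mc : M := PresentedMonoid.of mrels 2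

/-!
Write `a, b, c` for the generators. The squares `a²` and `b²` are central, and `c² = a²b²`, so
every element of `M` can be written as `w · (a²)ᵖ (b²)ᵠ` with `w` an alternating word in `a, b, c`,
i.e. a reduced word of the Coxeter group `W`. Left multiplication by a generator `x` acts on such triples `(p, q, w)`: push `x`
onto `w`, or, if `w` already starts with `x`, pop it and add the exponents of the central element
`x²`. This respects the defining relations, every generator acts injectively, and evaluating the
orbit of the empty triple gives back the acting element, so `M` is left cancellative. Reversing
words is an anti-automorphism of the presentation (`c² = a²b² = b²a²`), which turns left
cancellativity into right cancellativity.
-/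

open Function

theorem isLeftCancelMul_of_injective_orbit {M X : Type*} [Monoid M] [MulAction M X]
    (hinj : ∀ m : M, Injective (m • · : X → X)) (x₀ : X) (horb : Injective (· • x₀ : M → X)) :
    IsLeftCancelMul M where
  mul_left_cancel h g₁ g₂ H := horb <| hinj h <| by simp only [← mul_smul, H]

namespace PresentedMonoid

variable {α : Type*} {rels : FreeMonoid α → FreeMonoid α → Prop}

@[elab_as_elim]
theorem induction_of {P : PresentedMonoid rels → Prop} (of : ∀ a, P (of rels a)) (one : P 1)
    (mul : ∀ x y, P x → P y → P (x * y)) (m : PresentedMonoid rels) : P m :=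
  Submonoid.dense_induction _ (closure_range_of rels) (Set.forall_mem_range.2 of) one mul m

theorem commute_of_forall_commute_of {z : PresentedMonoid rels}
    (h : ∀ a, Commute z (.of rels a)) (m : PresentedMonoid rels) : Commute z m :=
  induction_of h (Commute.one_right z) (fun _ _ => Commute.mul_right) m

end PresentedMonoid

namespace M

local notation "σ" => PresentedMonoid.of mrels

theorem rel_ab : σ 0 * σ 0 * σ 1 = σ 1 * (σ 0 * σ 0) := PresentedMonoid.mk_eq_mk_of_rel mrels.ab
theorem rel_ba : σ 1 * σ 1 * σ 0 = σ 0 * (σ 1 * σ 1) := PresentedMonoid.mk_eq_mk_of_rel mrels.ba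
theorem rel_ac : σ 0 * σ 0 * σ 2 = σ 2 * (σ 0 * σ 0) := PresentedMonoid.mk_eq_mk_of_rel mrels.ac
theorem rel_bc : σ 1 * σ 1 * σ 2 = σ 2 * (σ 1 * σ 1) := PresentedMonoid.mk_eq_mk_of_rel mrels.bc
theorem rel_c2 : σ 0 * σ 0 * (σ 1 * σ 1) = σ 2 * σ 2 := PresentedMonoid.mk_eq_mk_of_rel mrels.c2

theorem commute_a_sq (x : M) : Commute (σ 0 * σ 0) x :=
  PresentedMonoid.commute_of_forall_commute_of
    (fun | 0 => .mul_left rfl rfl | 1 => rel_ab | 2 => rel_ac) x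

theorem commute_b_sq (x : M) : Commute (σ 1 * σ 1) x :=
  PresentedMonoid.commute_of_forall_commute_of
    (fun | 0 => rel_ba | 1 => .mul_left rfl rfl | 2 => rel_bc) x

def sqPow (d : ℕ × ℕ) : M := (σ 0 * σ 0) ^ d.1 * (σ 1 * σ 1) ^ d.2

theorem commute_sqPow (d : ℕ × ℕ) (x : M) : Commute (sqPow d) x :=
  ((commute_a_sq x).pow_left _).mul_left ((commute_b_sq x).pow_left _)

theorem sqPow_add (d e : ℕ × ℕ) : sqPow (d + e) = sqPow d * sqPow e := by
  simp only [sqPow, Prod.fst_add, Prod.snd_add, pow_add, mul_assoc,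
    ((commute_b_sq _).pow_left d.2).left_comm]

def sqExp : Fin 3 → ℕ × ℕ := ![(1, 0), (0, 1), (1, 1)]

theorem mul_self_eq_sqPow : ∀ i, σ i * σ i = sqPow (sqExp i)
  | 0 => by simp [sqPow, sqExp]
  | 1 => by simp [sqPow, sqExp]
  | 2 => by simp [sqPow, sqExp, ← rel_c2]

structure NormalForm where
  exp : ℕ × ℕ
  word : List (Fin 3)
  isChain : word.IsChain (· ≠ ·)

namespace NormalForm

def shift (d : ℕ × ℕ) (s : NormalForm) : NormalForm := ⟨s.exp + d, s.word, s.isChain⟩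

def cons (i : Fin 3) : NormalForm → NormalForm
  | ⟨d, [], _⟩ => ⟨d, [i], List.isChain_singleton i⟩
  | ⟨d, j :: w, h⟩ =>
    if hji : j = i then ⟨d + sqExp i, w, h.tail⟩
    else ⟨d, i :: j :: w, List.isChain_cons_cons.mpr ⟨Ne.symm hji, h⟩⟩

-- A pop leaves a word not starting with `i` (the word alternates), a push one starting with `i`.
theorem cons_injective (i : Fin 3) : Injective (cons i) := by
  rintro ⟨d, _ | ⟨j, w⟩, hs⟩ ⟨e, _ | ⟨k, v⟩, ht⟩ h <;>
    simp only [cons, mk.injEq, List.cons.injEq, List.nil_eq, reduceCtorEq, and_true,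
      and_false] at h ⊢ <;>
    grind

theorem cons_cons (i : Fin 3) (s : NormalForm) : cons i (cons i s) = shift (sqExp i) s := by
  rcases s with ⟨d, _ | ⟨j, w⟩, hs⟩
  · simp only [cons, ↓reduceDIte, shift]
  · simp only [cons, shift]
    grind

theorem cons_shift (i : Fin 3) (d : ℕ × ℕ) (s : NormalForm) :
    cons i (shift d s) = shift d (cons i s) := by
  rcases s with ⟨e, _ | ⟨j, w⟩, hs⟩
  · rfl
  · by_cases hji : j = i <;> simp [cons, shift, hji, add_right_comm]

theorem shift_shift (d e : ℕ × ℕ) (s : NormalForm) : shift d (shift e s) = shift (e + d) s := by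
  simp [shift, add_assoc]

theorem cons_cons_comm (i j : Fin 3) (s : NormalForm) :
    cons i (cons i (cons j s)) = cons j (cons i (cons i s)) := by
  rw [cons_cons, cons_cons, cons_shift]

theorem cons_a_sq_b_sq (s : NormalForm) :
    cons 0 (cons 0 (cons 1 (cons 1 s))) = cons 2 (cons 2 s) := by
  rw [cons_cons, cons_cons, shift_shift, cons_cons]
  rfl

def eval (s : NormalForm) : M := (s.word.map σ).prod * sqPow s.exp

theorem eval_cons (i : Fin 3) (s : NormalForm) : eval (cons i s) = σ i * eval s := by
  rcases s with ⟨d, _ | ⟨j, w⟩, hs⟩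
  · simp [cons, eval]
  · by_cases hji : j = i
    · subst hji
      simp only [cons, dif_pos, eval, List.map_cons, List.prod_cons]
      rw [← mul_assoc, ← mul_assoc, mul_self_eq_sqPow, (commute_sqPow _ _).eq, mul_assoc,
        ← sqPow_add, add_comm]
    · simp [cons, hji, eval, mul_assoc]

def act : M →* Function.End NormalForm :=
  PresentedMonoid.lift (M := Function.End NormalForm) cons fun _ _ r => by
    cases r <;> funext s
    · exact cons_cons_comm 0 1 s
    · exact cons_cons_comm 1 0 s
    · exact cons_cons_comm 0 2 s
    · exact cons_cons_comm 1 2 s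
    · exact cons_a_sq_b_sq s

instance : MulAction M NormalForm := MulAction.ofEndHom act

theorem injective_smul (m : M) : Injective (m • · : NormalForm → NormalForm) := by
  induction m using PresentedMonoid.induction_of with
  | of i => exact cons_injective i
  | one => exact fun a b h => by simpa only [one_smul] using h
  | mul x y hx hy => exact fun a b h => hy (hx (by simpa only [mul_smul] using h))

theorem eval_smul (m : M) (s : NormalForm) : eval (m • s) = m * eval s := by
  induction m using PresentedMonoid.induction_of generalizing s with
  | of i => exact eval_cons i s
  | one => rw [one_smul, one_mul]
  | mul x y hx hy => rw [mul_smul, hx, hy, mul_assoc]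

def nil : NormalForm := ⟨0, [], .nil⟩

theorem eval_smul_nil (m : M) : eval (m • nil) = m := by
  rw [eval_smul]
  simp [eval, nil, sqPow]

end NormalForm

instance : IsLeftCancelMul M :=
  isLeftCancelMul_of_injective_orbit NormalForm.injective_smul NormalForm.nil
    (LeftInverse.injective NormalForm.eval_smul_nil)

def rev : M →* Mᵐᵒᵖ :=
  PresentedMonoid.lift (fun i => .op (σ i)) fun _ _ r => by
    cases r <;>
      simp only [map_mul, FreeMonoid.lift_eval_of, ← MulOpposite.op_mul, MulOpposite.op_inj]
    · exact rel_ab.symm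
    · exact rel_ba.symm
    · exact rel_ac.symm
    · exact rel_bc.symm
    · exact (commute_a_sq _).eq.symm.trans rel_c2

theorem rev_op_comp_rev : (MonoidHom.op rev).comp rev = (MulEquiv.opOp M).toMonoidHom := by
  ext i
  rfl

theorem rev_injective : Injective rev :=
  .of_comp (f := MonoidHom.op rev) <| by
    rw [← MonoidHom.coe_comp, rev_op_comp_rev]
    exact (MulEquiv.opOp M).injective

instance : IsRightCancelMul M := rev_injective.isRightCancelMul rev (map_mul rev)

end M

theorem stmt_16 :
    (∀ h g₁ g₂ : M, h * g₁ = h * g₂ → g₁ = g₂) ∧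
    (∀ h g₁ g₂ : M, g₁ * h = g₂ * h → g₁ = g₂) :=
  ⟨fun _ _ _ => mul_left_cancel, fun _ _ _ => mul_right_cancel⟩
end
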